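/- arXiv:1907.12277 — 7 statements merged into one kernel-verified Lean document; each statement's English description precedes it below -/
import Mathlib

section
/- Let ψ : A(G) → ℂ be a state satisfying: (i) ψ(u,v) = ψ(v,u) for every arc (u,v) ∈ A(G); (ii) for every unmarked vertex u ∉ M the value ψ(u,v) is the same for all neighbors v of u; and (iii) for every marked vertex u ∈ M one has Σ_{v adjacent to u} ψ(u,v) = 0. Then Uψ = ψ, i.e., ψ is fixed by the walk operator. -/
open Finset

/-- The arc set `A(G) = {(u,v) : {u,v} ∈ E}` of a simple graph. -/
abbrev Arc {V : Type*} (G : SimpleGraph V) : Type _ := {p : V × V // G.Adj p.1 p.2}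

/-- The coin operator: Grover diffusion at unmarked vertices,
negated Grover diffusion at marked vertices. -/
noncomputable def coinOp {V : Type*} [Fintype V] [DecidableEq V] (G : SimpleGraph V)
    [DecidableRel G.Adj] (M : Set V) [DecidablePred (· ∈ M)] (ψ : Arc G → ℂ) : Arc G → ℂ :=
  fun a =>
    (if a.1.1 ∈ M then (-1 : ℂ) else 1) *
      ((2 / (G.degree a.1.1 : ℂ)) *
        (∑ w ∈ (G.neighborFinset a.1.1).attach,
          ψ ⟨(a.1.1, w.1), (G.mem_neighborFinset _ _).mp w.2⟩) - ψ a)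

/-- The flip-flop shift operator. -/
def shiftOp {V : Type*} (G : SimpleGraph V) (ψ : Arc G → ℂ) : Arc G → ℂ :=
  fun a => ψ ⟨(a.1.2, a.1.1), a.2.symm⟩

/-- The walk operator `U = S ∘ C`. -/
noncomputable def walkOp {V : Type*} [Fintype V] [DecidableEq V] (G : SimpleGraph V)
    [DecidableRel G.Adj] (M : Set V) [DecidablePred (· ∈ M)] (ψ : Arc G → ℂ) : Arc G → ℂ :=
  shiftOp G (coinOp G M ψ)

/-! Both hypotheses at a vertex `u` make the coin act trivially on the arcs leaving `u`: at a
marked vertex the Grover average vanishes, so `C` is `ψ ↦ -(-ψ)`; at an unmarked vertex `ψ` is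
constant on the outgoing arcs, so the average is `ψ` itself and `2ψ - ψ = ψ`. Hence `Cψ = ψ`, and
the symmetry `ψ(u,v) = ψ(v,u)` says exactly that `Sψ = ψ`. -/

theorem shiftOp_eq_self {V : Type*} {G : SimpleGraph V} {ψ : Arc G → ℂ}
    (hsym : ∀ a : Arc G, ψ a = ψ ⟨(a.1.2, a.1.1), a.2.symm⟩) : shiftOp G ψ = ψ :=
  funext fun a => (hsym a).symm

section Coin

variable {V : Type*} [Fintype V] [DecidableEq V] {G : SimpleGraph V} [DecidableRel G.Adj]
  {M : Set V} [DecidablePred (· ∈ M)] {ψ : Arc G → ℂ}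

theorem coinOp_apply_of_mem {a : Arc G} (ha : a.1.1 ∈ M)
    (hsum : ∑ w ∈ (G.neighborFinset a.1.1).attach,
      ψ ⟨(a.1.1, w.1), (G.mem_neighborFinset _ _).mp w.2⟩ = 0) :
    coinOp G M ψ a = ψ a := by
  simp only [coinOp, if_pos ha, hsum, mul_zero, zero_sub, neg_mul_neg, one_mul]

theorem coinOp_apply_of_notMem {a : Arc G} (ha : a.1.1 ∉ M)
    (hconst : ∀ (w : V) (hw : G.Adj a.1.1 w), ψ ⟨(a.1.1, w), hw⟩ = ψ a) :
    coinOp G M ψ a = ψ a := by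
  have hsum : ∑ w ∈ (G.neighborFinset a.1.1).attach,
      ψ ⟨(a.1.1, w.1), (G.mem_neighborFinset _ _).mp w.2⟩ = G.degree a.1.1 * ψ a := by
    rw [sum_congr rfl fun w _ => hconst w.1 _, sum_const, card_attach, nsmul_eq_mul,
      SimpleGraph.card_neighborFinset_eq_degree]
  have hdeg : (G.degree a.1.1 : ℂ) ≠ 0 :=
    Nat.cast_ne_zero.mpr ((G.degree_pos_iff_exists_adj a.1.1).mpr ⟨a.1.2, a.2⟩).ne'
  simp only [coinOp, if_neg ha, hsum, one_mul]
  field_simp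
  ring

end Coin

theorem stmt0_general {V : Type*} [Fintype V] [DecidableEq V] (G : SimpleGraph V) [DecidableRel G.Adj]
    (M : Set V) [DecidablePred (· ∈ M)] (ψ : Arc G → ℂ)
    (hsym : ∀ a : Arc G, ψ a = ψ ⟨(a.1.2, a.1.1), a.2.symm⟩)
    (hunmarked : ∀ u : V, u ∉ M → ∀ v w : V, (hv : G.Adj u v) → (hw : G.Adj u w) →
      ψ ⟨(u, v), hv⟩ = ψ ⟨(u, w), hw⟩)
    (hmarked : ∀ u : V, u ∈ M →
      ∑ w ∈ (G.neighborFinset u).attach,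
        ψ ⟨(u, w.1), (G.mem_neighborFinset _ _).mp w.2⟩ = 0) :
    walkOp G M ψ = ψ := by
  have hcoin : coinOp G M ψ = ψ := by
    funext a
    by_cases ha : a.1.1 ∈ M
    · exact coinOp_apply_of_mem ha (hmarked _ ha)
    · exact coinOp_apply_of_notMem ha fun w hw => hunmarked _ ha w a.1.2 hw a.2
  rw [walkOp, hcoin, shiftOp_eq_self hsym]

theorem stmt0 {V : Type*} [Fintype V] [DecidableEq V] (G : SimpleGraph V) [DecidableRel G.Adj]
    (hdeg : ∀ v : V, 0 < G.degree v)
    (M : Set V) [DecidablePred (· ∈ M)] (ψ : Arc G → ℂ)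
    (hsym : ∀ a : Arc G, ψ a = ψ ⟨(a.1.2, a.1.1), a.2.symm⟩)
    (hunmarked : ∀ u : V, u ∉ M → ∀ v w : V, (hv : G.Adj u v) → (hw : G.Adj u w) →
      ψ ⟨(u, v), hv⟩ = ψ ⟨(u, w), hw⟩)
    (hmarked : ∀ u : V, u ∈ M →
      ∑ w ∈ (G.neighborFinset u).attach,
        ψ ⟨(u, w.1), (G.mem_neighborFinset _ _).mp w.2⟩ = 0) :
    walkOp G M ψ = ψ :=
  stmt0_general G M ψ hsym hunmarked hmarked
end

section
/- Suppose G is connected, M is nonempty, the subgraph of G induced on M is connected, and the subgraph of G induced on V \ M is nonempty and disconnected (it has at least two connected components). Then the coined quantum walk on G with marked set M has a stationary state, i.e., there exists a nonzero ψ : A(G) → ℂ with Uψ = ψ. -/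
open Finset

/-!
A weighting `ψ` of the arcs that is symmetric (`S ψ = ψ`), constant around every unmarked vertex
and sums to zero around every marked vertex is fixed by `C` and by `S`, hence by `U`. Such
weightings are parametrised by one value for each connected component of `G[V \ M]` (carried by
every arc touching it) and one value for each edge of `G[M]`, subject to `|M|` linear equations.
As `G[M]` is connected it has at least `|M| - 1` edges, so when `G[V \ M]` has two or more
components the unknowns outnumber the equations and a nonzero solution exists.
-/

open SimpleGraph

section Walk

variable {V : Type*} [Fintype V] [DecidableEq V] {G : SimpleGraph V} [DecidableRel G.Adj]
  {M : Set V} [DecidablePred (· ∈ M)]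

theorem coinOp_eq_self {ψ : Arc G → ℂ}
    (hmarked : ∀ v ∈ M, ∑ w ∈ (G.neighborFinset v).attach,
      ψ ⟨(v, w.1), (G.mem_neighborFinset _ _).mp w.2⟩ = 0)
    (hunmarked : ∀ a b : Arc G, a.1.1 = b.1.1 → a.1.1 ∉ M → ψ a = ψ b) :
    coinOp G M ψ = ψ := by
  funext a
  obtain ⟨⟨v, u⟩, hvu⟩ := a
  by_cases hv : v ∈ M
  · simp [coinOp, hv, hmarked v hv]
  · have hsum : ∑ w ∈ (G.neighborFinset v).attach,
        ψ ⟨(v, w.1), (G.mem_neighborFinset _ _).mp w.2⟩ = G.degree v * ψ ⟨(v, u), hvu⟩ := by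
      rw [Finset.sum_congr rfl fun w _ => hunmarked ⟨(v, w.1), _⟩ ⟨(v, u), hvu⟩ rfl hv,
        Finset.sum_const, Finset.card_attach, card_neighborFinset_eq_degree, nsmul_eq_mul]
    have hdeg : (G.degree v : ℂ) ≠ 0 := by
      rw [Nat.cast_ne_zero, ← card_neighborFinset_eq_degree]
      exact Finset.card_ne_zero_of_mem ((G.mem_neighborFinset _ _).mpr hvu)
    simp only [coinOp, if_neg hv, hsum]
    field_simp
    ring

theorem walkOp_eq_self {ψ : Arc G → ℂ} (hsymm : shiftOp G ψ = ψ)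
    (hmarked : ∀ v ∈ M, ∑ w ∈ (G.neighborFinset v).attach,
      ψ ⟨(v, w.1), (G.mem_neighborFinset _ _).mp w.2⟩ = 0)
    (hunmarked : ∀ a b : Arc G, a.1.1 = b.1.1 → a.1.1 ∉ M → ψ a = ψ b) :
    walkOp G M ψ = ψ := by
  rw [walkOp, coinOp_eq_self hmarked hunmarked, hsymm]

end Walk

section Construction

variable {V : Type*} {G : SimpleGraph V} {M : Set V} [DecidablePred (· ∈ M)]

def arcIndex (a : Arc G) : (G.induce Mᶜ).ConnectedComponent ⊕ (G.induce M).edgeSet :=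
  if h₁ : a.1.1 ∈ M then
    if h₂ : a.1.2 ∈ M then .inr ⟨s(⟨a.1.1, h₁⟩, ⟨a.1.2, h₂⟩), (G.induce M).mem_edgeSet.mpr a.2⟩
    else .inl ((G.induce Mᶜ).connectedComponentMk ⟨a.1.2, h₂⟩)
  else .inl ((G.induce Mᶜ).connectedComponentMk ⟨a.1.1, h₁⟩)

theorem arcIndex_of_fst_notMem {a : Arc G} (h : a.1.1 ∉ M) :
    arcIndex a = .inl ((G.induce Mᶜ).connectedComponentMk ⟨a.1.1, h⟩) := by
  rw [arcIndex, dif_neg h]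

theorem arcIndex_swap (a : Arc G) :
    arcIndex (M := M) ⟨(a.1.2, a.1.1), a.2.symm⟩ = arcIndex a := by
  obtain ⟨⟨u, v⟩, huv⟩ := a
  by_cases hu : u ∈ M <;> by_cases hv : v ∈ M <;> simp [arcIndex, hu, hv]
  exact Adj.reachable (G := G.induce Mᶜ) huv.symm

theorem arcIndex_surjective (hadj : ∀ v ∉ M, ∃ w, G.Adj v w) :
    Function.Surjective (arcIndex (G := G) (M := M)) := by
  rintro (C | ⟨e, he⟩)
  · obtain ⟨⟨v, hv⟩, rfl⟩ := C.exists_rep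
    obtain ⟨w, hvw⟩ := hadj v hv
    exact ⟨⟨(v, w), hvw⟩, arcIndex_of_fst_notMem (a := ⟨(v, w), hvw⟩) hv⟩
  · induction e using Sym2.ind with
    | h u v =>
      refine ⟨⟨(u.1, v.1), he⟩, ?_⟩
      simp [arcIndex, u.2, v.2]

end Construction

theorem exists_walkOp_eq_self_of_card_lt {V : Type*} [Fintype V] [DecidableEq V]
    {G : SimpleGraph V} [DecidableRel G.Adj] {M : Set V} [DecidablePred (· ∈ M)]
    (hadj : ∀ v ∉ M, ∃ w, G.Adj v w)
    (hcard : Nat.card M <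
      Nat.card (G.induce Mᶜ).ConnectedComponent + Nat.card (G.induce M).edgeSet) :
    ∃ ψ : Arc G → ℂ, ψ ≠ 0 ∧ walkOp G M ψ = ψ := by
  classical
  let markedSums : ((G.induce Mᶜ).ConnectedComponent ⊕ (G.induce M).edgeSet → ℂ) →ₗ[ℂ]
      (M → ℂ) :=
    LinearMap.pi fun v => ∑ w ∈ (G.neighborFinset v.1).attach,
      LinearMap.proj (arcIndex ⟨(v.1, w.1), (G.mem_neighborFinset _ _).mp w.2⟩)
  have hker : LinearMap.ker markedSums ≠ ⊥ := LinearMap.ker_ne_bot_of_finrank_lt <| by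
    simpa [Module.finrank_fintype_fun_eq_card, Nat.card_eq_fintype_card] using hcard
  obtain ⟨c, hc, hc0⟩ := Submodule.exists_mem_ne_zero_of_ne_bot hker
  refine ⟨c ∘ arcIndex, ?_, walkOp_eq_self ?_ ?_ ?_⟩
  · obtain ⟨i, hi⟩ := Function.ne_iff.mp hc0
    obtain ⟨a, rfl⟩ := arcIndex_surjective hadj i
    exact fun h => hi (congrFun h a)
  · funext a
    exact congrArg c (arcIndex_swap a)
  · intro v hv
    simpa [markedSums] using congrFun hc ⟨v, hv⟩
  · intro a b hab ha
    simp only [Function.comp_apply, arcIndex_of_fst_notMem ha,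
      arcIndex_of_fst_notMem (hab ▸ ha : b.1.1 ∉ M), hab]

theorem stmt1_general {V : Type*} [Fintype V] [DecidableEq V] (G : SimpleGraph V) [DecidableRel G.Adj]
    (hdeg : ∀ v : V, 0 < G.degree v)
    (M : Set V) [DecidablePred (· ∈ M)]
    (hMconn : (G.induce M).Connected)
    (hdisc : ¬ (G.induce Mᶜ).Preconnected) :
    ∃ ψ : Arc G → ℂ, ψ ≠ 0 ∧ walkOp G M ψ = ψ := by
  have hcomponents : 1 < Nat.card (G.induce Mᶜ).ConnectedComponent := by
    simp only [Preconnected, not_forall] at hdisc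
    obtain ⟨u, v, huv⟩ := hdisc
    exact Finite.one_lt_card_iff_nontrivial.mpr
      ⟨_, _, fun h => huv (ConnectedComponent.exact h)⟩
  have hedges := hMconn.card_vert_le_card_edgeSet_add_one
  exact exists_walkOp_eq_self_of_card_lt
    (fun v _ => (G.degree_pos_iff_exists_adj v).mp (hdeg v)) (by omega)

theorem stmt1 {V : Type*} [Fintype V] [DecidableEq V] (G : SimpleGraph V) [DecidableRel G.Adj]
    (hdeg : ∀ v : V, 0 < G.degree v)
    (M : Set V) [DecidablePred (· ∈ M)]
    (hG : G.Connected) (hM : M.Nonempty)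
    (hMconn : (G.induce M).Connected)
    (hcompl : Mᶜ.Nonempty)
    (hdisc : ¬ (G.induce Mᶜ).Preconnected) :
    ∃ ψ : Arc G → ℂ, ψ ≠ 0 ∧ walkOp G M ψ = ψ :=
  stmt1_general G hdeg M hMconn hdisc
end

section
/- Let H = (V, E) be a finite connected simple graph that is bipartite with partite sets A and B (every edge joins a vertex of A to a vertex of B), and let s : V → ℝ. Then there exists an edge-weight function w : E → ℝ such that for every vertex v ∈ V the sum of w over the edges incident to v equals s(v), if and only if Σ_{v ∈ A} s(v) = Σ_{v ∈ B} s(v). -/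
/-!
Weight each vertex by its side, `ε = +1` on `A` and `-1` on `B`. Every edge joins the two
sides, so it contributes `w e * (ε a + ε b) = 0` to `∑ v, ε v * vertexSum w v`; hence the two
side sums of a vertex-sum vector agree. Conversely, an edge `x a` realises `δ_x + δ_a`, and
telescoping with alternating signs along a walk from `v` to a fixed vertex `r` realises
`ε r • δ_v - ε v • δ_r`. For connected `H` these vectors span the hyperplane
`∑ v, ε v * s v = 0`.
-/

open Finset

/-- The vertex sum of an edge-weight function `w : E → ℝ` at a vertex `v`:
the sum of `w` over the edges incident to `v`. -/
noncomputable def vertexSum {V : Type*} [Fintype V] [DecidableEq V] (H : SimpleGraph V)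
    [DecidableRel H.Adj] (w : H.edgeSet → ℝ) (v : V) : ℝ :=
  ∑ e ∈ (H.incidenceFinset v).attach,
    w ⟨e.1, H.incidenceSet_subset v ((H.mem_incidenceFinset v e.1).mp e.2)⟩

lemma Sym2.ite_mem_eq_single_add_single {V M : Type*} [DecidableEq V] [AddZeroClass M]
    {a b : V} (hab : a ≠ b) (c : M) (v : V) :
    (if v ∈ s(a, b) then c else 0) = (Pi.single a c + Pi.single b c : V → M) v := by
  by_cases ha : v = a
  · subst ha; simp [hab]
  by_cases hb : v = b
  · subst hb; simp [hab.symm]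
  · simp [ha, hb]

namespace SimpleGraph

variable {V : Type*} [Fintype V] [DecidableEq V] (H : SimpleGraph V) [DecidableRel H.Adj]

lemma vertexSum_eq_sum_edgeSet (w : H.edgeSet → ℝ) (v : V) :
    vertexSum H w v = ∑ e : H.edgeSet, if v ∈ (e : Sym2 V) then w e else 0 := by
  rw [vertexSum, ← sum_filter]
  refine sum_bij
    (fun e _ => ⟨e.1, H.incidenceSet_subset v ((H.mem_incidenceFinset v e.1).mp e.2)⟩)
    (fun e _ => by simpa using ((H.mem_incidenceFinset v e.1).mp e.2).2)
    (fun _ _ _ _ h => Subtype.ext (Subtype.mk_eq_mk.mp h))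
    (fun e he => ⟨⟨e.1, (H.mem_incidenceFinset v e.1).mpr ⟨e.2, by simpa using he⟩⟩,
      mem_attach _ _, rfl⟩)
    (fun _ _ => rfl)

noncomputable def vertexSumLinearMap : (H.edgeSet → ℝ) →ₗ[ℝ] V → ℝ where
  toFun := vertexSum H
  map_add' w₁ w₂ := by
    ext v
    simp [vertexSum, sum_add_distrib]
  map_smul' c w := by
    ext v
    simp [vertexSum, mul_sum]

lemma vertexSum_single {a b : V} (h : H.Adj a b) :
    vertexSum H (Pi.single ⟨s(a, b), h⟩ 1) = Pi.single a 1 + Pi.single b 1 := by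
  ext v
  rw [vertexSum_eq_sum_edgeSet, Fintype.sum_eq_single ⟨s(a, b), h⟩, Pi.single_eq_same,
    Sym2.ite_mem_eq_single_add_single h.ne]
  intro e he
  simp [Pi.single_eq_of_ne he]

lemma sum_mul_vertexSum_eq_zero (ε : V → ℝ) (hε : ∀ u v, H.Adj u v → ε u = -ε v)
    (w : H.edgeSet → ℝ) : ∑ v, ε v * vertexSum H w v = 0 := by
  simp only [vertexSum_eq_sum_edgeSet, mul_sum]
  rw [sum_comm]
  refine sum_eq_zero fun ⟨e, he⟩ _ => ?_
  induction e using Sym2.ind with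
  | h a b =>
    have hab : H.Adj a b := he
    simp only [Sym2.ite_mem_eq_single_add_single hab.ne, Pi.add_apply, mul_add, sum_add_distrib]
    simp [Pi.single_apply, hε a b hab]

lemma sub_single_mem_range_of_walk (ε : V → ℝ) (hε : ∀ u v, H.Adj u v → ε u = -ε v)
    {x y : V} (p : H.Walk x y) :
    ε y • Pi.single x 1 - ε x • Pi.single y 1 ∈ LinearMap.range (vertexSumLinearMap H) := by
  induction p with
  | nil => simp
  | @cons x a y h p ih =>
    have hedge : Pi.single x 1 + Pi.single a 1 ∈ LinearMap.range (vertexSumLinearMap H) :=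
      ⟨_, vertexSum_single H h⟩
    convert Submodule.sub_mem _ (Submodule.smul_mem _ (ε y) hedge) ih using 1
    rw [hε x a h]
    module

theorem exists_vertexSum_eq_iff (hconn : H.Connected) (ε : V → ℝ)
    (hε : ∀ u v, H.Adj u v → ε u = -ε v) (hε₀ : ε ≠ 0) (s : V → ℝ) :
    (∃ w, vertexSum H w = s) ↔ ∑ v, ε v * s v = 0 := by
  refine ⟨fun ⟨w, hw⟩ => hw ▸ sum_mul_vertexSum_eq_zero H ε hε w, fun hs => ?_⟩
  obtain ⟨r, hr : ε r ≠ 0⟩ := Function.ne_iff.mp hε₀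
  have hdecomp : ε r • s = ∑ v, s v • (ε r • Pi.single v 1 - ε v • Pi.single r 1) :=
    calc ε r • s
        = ∑ v, (ε r * s v) • Pi.single v 1 - (∑ v, ε v * s v) • Pi.single r 1 := by
          rw [hs, zero_smul, sub_zero]
          exact pi_eq_sum_univ' _
      _ = ∑ v, s v • (ε r • Pi.single v 1 - ε v • Pi.single r 1) := by
          simp only [smul_sub, sum_sub_distrib, smul_smul, sum_smul, mul_comm]
  refine (LinearMap.mem_range (f := vertexSumLinearMap H)).mp ?_
  rw [← inv_smul_smul₀ hr s, hdecomp]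
  exact Submodule.smul_mem _ _ <| Submodule.sum_mem _ fun v _ =>
    Submodule.smul_mem _ _ <| sub_single_mem_range_of_walk H ε hε (hconn.preconnected v r).some

end SimpleGraph

theorem stmt2 {V : Type*} [Fintype V] [DecidableEq V] (H : SimpleGraph V) [DecidableRel H.Adj]
    (hconn : H.Connected)
    (A B : Finset V) (hpart : A ∪ B = Finset.univ) (hdisj : Disjoint A B)
    (hbip : ∀ u v : V, H.Adj u v → (u ∈ A ∧ v ∈ B) ∨ (u ∈ B ∧ v ∈ A))
    (s : V → ℝ) :
    (∃ w : H.edgeSet → ℝ, ∀ v : V, vertexSum H w v = s v) ↔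
      ∑ v ∈ A, s v = ∑ v ∈ B, s v := by
  set ε : V → ℝ := fun v => (if v ∈ A then 1 else 0) - (if v ∈ B then 1 else 0)
  have hε : ∀ u v, H.Adj u v → ε u = -ε v := by
    intro u v huv
    rcases hbip u v huv with ⟨hu, hv⟩ | ⟨hu, hv⟩
    · simp [ε, hu, hv, disjoint_left.mp hdisj hu, disjoint_right.mp hdisj hv]
    · simp [ε, hu, hv, disjoint_right.mp hdisj hu, disjoint_left.mp hdisj hv]
  have hε₀ : ε ≠ 0 := by
    obtain ⟨r⟩ := hconn.nonempty
    refine Function.ne_iff.mpr ⟨r, ?_⟩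
    rcases mem_union.mp (hpart ▸ mem_univ r) with hr | hr
    · simp [ε, hr, disjoint_left.mp hdisj hr]
    · simp [ε, hr, disjoint_right.mp hdisj hr]
  have hsum : ∑ v, ε v * s v = ∑ v ∈ A, s v - ∑ v ∈ B, s v := by
    simp [ε, sub_mul, sum_sub_distrib, ite_mul]
  simp_rw [← funext_iff]
  rw [H.exists_vertexSum_eq_iff hconn ε hε hε₀, hsum, sub_eq_zero]
end

section
/- Let H = (V, E) be a finite connected simple graph that is not bipartite (it contains a cycle of odd length), and let s : V → ℝ be arbitrary. Then there exists an edge-weight function w : E → ℝ such that for every vertex v ∈ V the sum of w over the edges incident to v equals s(v). -/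
/-!
Edge weights act linearly on vertex-sum vectors, so it suffices to realise every indicator
`Pi.single v 1`. An edge `uv` realises `𝟙_u + 𝟙_v`, and telescoping along a walk from `u` to `v`
realises `𝟙_u - (-1)^ℓ 𝟙_v`, with `ℓ` the length of the walk. A non-bipartite graph has a closed
walk of odd length at some `x`, which realises `2 𝟙_x`; connectivity then carries `𝟙_x` to every
other vertex.
-/

open Finset

namespace SimpleGraph

lemma exists_bipartition_of_colorable_two {V : Type*} {G : SimpleGraph V} (h : G.Colorable 2) :
    ∃ A B : Set V, A ∪ B = Set.univ ∧ Disjoint A B ∧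
      ∀ u v : V, G.Adj u v → (u ∈ A ∧ v ∈ B) ∨ (u ∈ B ∧ v ∈ A) := by
  obtain ⟨c, hc⟩ := h
  refine ⟨{v | c v = 0}, {v | c v = 0}ᶜ, Set.union_compl_self _, disjoint_compl_right,
    fun u v huv => ?_⟩
  have hne : c u ≠ c v := hc huv
  simp only [Set.mem_ofPred_eq, Set.mem_compl_iff]
  omega

variable {V : Type*} [Fintype V] [DecidableEq V] (H : SimpleGraph V) [DecidableRel H.Adj]

noncomputable def vertexSumMap : (H.edgeSet → ℝ) →ₗ[ℝ] V → ℝ where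
  toFun := vertexSum H
  map_add' w₁ w₂ := by ext v; simp [vertexSum, sum_add_distrib]
  map_smul' c w := by ext v; simp [vertexSum, mul_sum]

variable {H}

lemma single_add_single_mem_range_vertexSumMap {u v : V} (huv : H.Adj u v) :
    Pi.single u 1 + Pi.single v 1 ∈ LinearMap.range (vertexSumMap H) := by
  refine ⟨fun e => if e.1 = s(u, v) then 1 else 0, funext fun x => ?_⟩
  simp only [vertexSumMap, LinearMap.coe_mk, AddHom.coe_mk, vertexSum]
  rw [sum_attach (H.incidenceFinset x) (fun e => if e = s(u, v) then (1 : ℝ) else 0),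
    sum_ite_eq']
  by_cases hu : x = u <;> by_cases hv : x = v <;>
    simp [mk'_mem_incidenceSet_iff, huv, hu, hv, huv.ne]

lemma Walk.single_sub_smul_single_mem_range_vertexSumMap {u v : V} (p : H.Walk u v) :
    Pi.single u 1 - (-1 : ℝ) ^ p.length • Pi.single v 1 ∈ LinearMap.range (vertexSumMap H) := by
  induction p with
  | nil => simp
  | cons hab q ih =>
    convert Submodule.sub_mem _ (single_add_single_mem_range_vertexSumMap hab) ih using 1
    rw [length_cons, pow_succ]
    module

lemma single_mem_range_vertexSumMap_of_odd_loop {x : V} (p : H.Walk x x) (hp : Odd p.length) :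
    Pi.single x 1 ∈ LinearMap.range (vertexSumMap H) := by
  have h := p.single_sub_smul_single_mem_range_vertexSumMap
  rw [hp.neg_one_pow] at h
  convert Submodule.smul_mem _ (1 / 2 : ℝ) h using 1
  module

lemma range_vertexSumMap_eq_top (hconn : H.Connected) {x : V} (p : H.Walk x x)
    (hp : Odd p.length) : LinearMap.range (vertexSumMap H) = ⊤ := by
  have hsingle : ∀ u, Pi.single u 1 ∈ LinearMap.range (vertexSumMap H) := fun u => by
    obtain ⟨q⟩ := hconn u x
    convert Submodule.add_mem _ q.single_sub_smul_single_mem_range_vertexSumMap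
      (Submodule.smul_mem _ ((-1 : ℝ) ^ q.length) (single_mem_range_vertexSumMap_of_odd_loop p hp))
      using 1
    module
  rw [eq_top_iff, ← (Pi.basisFun ℝ V).span_eq, Submodule.span_le]
  rintro _ ⟨u, rfl⟩
  simpa using hsingle u

end SimpleGraph

theorem stmt3 {V : Type*} [Fintype V] [DecidableEq V] (H : SimpleGraph V) [DecidableRel H.Adj]
    (hconn : H.Connected)
    (hnotbip : ¬ ∃ (A B : Set V), A ∪ B = Set.univ ∧ Disjoint A B ∧
        ∀ u v : V, H.Adj u v → (u ∈ A ∧ v ∈ B) ∨ (u ∈ B ∧ v ∈ A))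
    (s : V → ℝ) :
    ∃ w : H.edgeSet → ℝ, ∀ v : V, vertexSum H w v = s v := by
  obtain ⟨x, p, hp⟩ : ∃ (x : V) (p : H.Walk x x), Odd p.length := by
    by_contra! hall
    exact hnotbip (SimpleGraph.exists_bipartition_of_colorable_two
      (SimpleGraph.two_colorable_iff_forall_loop_even.mpr
        fun x p => Nat.not_odd_iff_even.mp (hall x p)))
  obtain ⟨w, hw⟩ : s ∈ LinearMap.range H.vertexSumMap := by
    rw [SimpleGraph.range_vertexSumMap_eq_top hconn p hp]
    trivial
  exact ⟨w, congr_fun hw⟩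
end

section
/- Suppose G is connected, the subgraph of G induced on M is connected and nonempty, and the subgraph of G induced on V \ M has exactly two connected components H₁ = (V₁, E₁) and H₂ = (V₂, E₂). Suppose further that the induced subgraph on M is bipartite with partite sets M₁ and M₂, and let k_{ij} be the number of edges of G joining a vertex of H_i to a vertex of M_j (for i, j ∈ {1, 2}). If k₁₁ = k₂₁, k₁₂ = k₂₂ and |E₁| = |E₂|, then there exists a nonzero stationary state ψ (Uψ = ψ) such that Σ_{(u,v) ∈ A(G)} ψ(u,v) = 0, i.e., ψ is orthogonal to the uniform initial state which has amplitude 1/√(2m) on every arc. -/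
open Finset

/-!
Give every arc leaving an unmarked vertex `u`, and every arc from a marked vertex into `u`, the
amplitude `γ u = ±1`, the sign of the component `H₁` or `H₂` containing `u`. Grover diffusion
fixes such a locally constant profile at unmarked vertices, and negated diffusion at a marked
vertex `v` reflects every arc (`ψ (v, u) = ψ (u, v)`) as soon as the amplitudes leaving `v` sum
to zero. So it remains to put symmetric amplitudes `X` on the arcs inside `M` with net outflow
`-(A γ) v` at each marked `v`, where `A` is the adjacency matrix of `G`. Taking
`X u w = σ u * (z u - z w)`, where `σ = ±1` is the sign of the bipartition of `G[M]`, turns this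
into the equation `L z = -σ * A γ` for the Laplacian `L` of the connected graph `G[M]`, which is
solvable because `σ ⬝ A γ = k₁₁ - k₁₂ - k₂₁ + k₂₂ = 0`. The total amplitude is then
`γ ⬝ A 1 = (2|E₁| + k₁₁ + k₁₂) - (2|E₂| + k₂₁ + k₂₂) = 0`.
-/

open Matrix

namespace SimpleGraph

section Laplacian

variable {W : Type*} [Fintype W] [DecidableEq W] {H : SimpleGraph W} [DecidableRel H.Adj]

theorem Connected.exists_lapMatrix_mulVec_eq (hH : H.Connected) {c : W → ℝ}
    (hc : ∑ i, c i = 0) : ∃ z, H.lapMatrix ℝ *ᵥ z = c := by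
  have hT : (H.lapMatrix ℝ).toEuclideanLin.IsSymmetric :=
    isSymmetric_toEuclideanLin_iff.mpr (H.isHermitian_lapMatrix ℝ)
  have hc' : WithLp.toLp 2 c ∈ LinearMap.range (H.lapMatrix ℝ).toEuclideanLin := by
    rw [← Submodule.orthogonal_orthogonal (LinearMap.range _), hT.orthogonal_range]
    intro k hk
    have hconst : ∀ i j, k i = k j := by
      have : H.lapMatrix ℝ *ᵥ k.ofLp = 0 := by simpa using congrArg WithLp.ofLp hk
      exact fun i j => (lapMatrix_mulVec_eq_zero_iff_forall_reachable H).mp this i j (hH i j)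
    obtain ⟨i₀⟩ := hH.nonempty
    simp [PiLp.inner_apply, hconst _ i₀, ← Finset.sum_mul, hc]
  obtain ⟨z, hz⟩ := hc'
  exact ⟨z.ofLp, by simpa using congrArg WithLp.ofLp hz⟩

theorem Connected.exists_flow_of_sign (hH : H.Connected) {σ : W → ℝ}
    (hσ : ∀ i, σ i * σ i = 1) (hflip : ∀ i j, H.Adj i j → σ j = -σ i) {b : W → ℝ}
    (hb : ∑ i, σ i * b i = 0) :
    ∃ x : W → W → ℝ, (∀ i j, H.Adj i j → x j i = x i j) ∧
      ∀ i, ∑ j ∈ H.neighborFinset i, x i j = b i := by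
  obtain ⟨z, hz⟩ := hH.exists_lapMatrix_mulVec_eq (c := fun i => σ i * b i) hb
  refine ⟨fun i j => σ i * (z i - z j), fun i j hij => ?_, fun i => ?_⟩
  · simp only [hflip i j hij]
    ring
  · have hzi := congrFun hz i
    rw [lapMatrix_mulVec_apply, ← card_neighborFinset_eq_degree] at hzi
    calc ∑ j ∈ H.neighborFinset i, σ i * (z i - z j)
        = σ i * (#(H.neighborFinset i) * z i - ∑ j ∈ H.neighborFinset i, z j) := by
          rw [← Finset.mul_sum, Finset.sum_sub_distrib, Finset.sum_const, nsmul_eq_mul]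
      _ = b i := by rw [hzi, ← mul_assoc, hσ, one_mul]

end Laplacian

variable {V : Type*} [Fintype V] {G : SimpleGraph V} [DecidableRel G.Adj]

section Induce

variable [DecidableEq V] {M : Set V} [DecidablePred (· ∈ M)]

theorem sum_neighborFinset_induce {R : Type*} [AddCommMonoid R] (v : M) (f : V → R) :
    ∑ w ∈ (G.induce M).neighborFinset v, f w = ∑ w ∈ G.neighborFinset v ∩ M.toFinset, f w := by
  rw [← map_neighborFinset_induce, Finset.sum_map]
  rfl

theorem exists_flow_of_connected_induce (hM : (G.induce M).Connected) {σ : V → ℝ}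
    (hσ : ∀ v ∈ M, σ v * σ v = 1) (hflip : ∀ u ∈ M, ∀ w ∈ M, G.Adj u w → σ w = -σ u)
    {b : V → ℝ} (hb : ∑ v ∈ M.toFinset, σ v * b v = 0) :
    ∃ X : V → V → ℝ, (∀ u ∈ M, ∀ w ∈ M, G.Adj u w → X w u = X u w) ∧
      ∀ v ∈ M, ∑ w ∈ G.neighborFinset v ∩ M.toFinset, X v w = b v := by
  obtain ⟨x, hxsymm, hxflow⟩ := hM.exists_flow_of_sign (σ := fun v => σ v) (b := fun v => b v)
    (fun v => hσ v v.2) (fun u w h => hflip u u.2 w w.2 h)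
    (by rwa [Finset.sum_set_coe (f := fun v => σ v * b v)])
  refine ⟨fun u w => if h : u ∈ M ∧ w ∈ M then x ⟨u, h.1⟩ ⟨w, h.2⟩ else 0,
    fun u hu w hw huw => ?_, fun v hv => ?_⟩
  · simpa [hu, hw] using hxsymm ⟨u, hu⟩ ⟨w, hw⟩ huw
  · rw [← hxflow ⟨v, hv⟩, ← sum_neighborFinset_induce ⟨v, hv⟩]
    refine Finset.sum_congr rfl fun w _ => ?_
    simp [hv, w.2]

end Induce

section Counting

variable (G)

theorem sum_arc {R : Type*} [AddCommMonoid R] (f : V → V → R) :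
    ∑ a : Arc G, f a.1.1 a.1.2 = ∑ v, ∑ w ∈ G.neighborFinset v, f v w := by
  rw [← Finset.sum_subtype (Finset.univ.filter fun p : V × V => G.Adj p.1 p.2) (by simp)
    (fun p : V × V => f p.1 p.2), Finset.sum_filter, Fintype.sum_prod_type]
  simp only [neighborFinset_eq_filter, Finset.sum_filter]

theorem dotProduct_adjMatrix_mulVec_comm {R : Type*} [CommSemiring R] (x y : V → R) :
    x ⬝ᵥ (G.adjMatrix R *ᵥ y) = y ⬝ᵥ (G.adjMatrix R *ᵥ x) := by
  rw [dotProduct_mulVec, ← mulVec_transpose, transpose_adjMatrix, dotProduct_comm]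

theorem indicator_dotProduct_adjMatrix_mulVec_indicator (A B : Set V) :
    A.indicator 1 ⬝ᵥ (G.adjMatrix ℝ *ᵥ B.indicator 1)
      = ({p : V × V | p.1 ∈ A ∧ p.2 ∈ B ∧ G.Adj p.1 p.2}.ncard : ℝ) := by
  classical
  rw [Set.ncard_eq_toFinset_card', Set.toFinset_ofPred, Finset.natCast_card_filter,
    Fintype.sum_prod_type]
  simp only [dotProduct, mulVec, Finset.mul_sum, Set.indicator_apply, adjMatrix_apply]
  refine Finset.sum_congr rfl fun v _ => Finset.sum_congr rfl fun w _ => ?_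
  split_ifs <;> simp_all

theorem two_mul_ncard_edges_within (A : Set V) :
    2 * {e : Sym2 V | e ∈ G.edgeSet ∧ ∀ v ∈ e, v ∈ A}.ncard
      = {p : V × V | p.1 ∈ A ∧ p.2 ∈ A ∧ G.Adj p.1 p.2}.ncard := by
  classical
  set K := fromEdgeSet {e : Sym2 V | e ∈ G.edgeSet ∧ ∀ v ∈ e, v ∈ A}
  have hK : K.edgeSet = {e : Sym2 V | e ∈ G.edgeSet ∧ ∀ v ∈ e, v ∈ A} := by
    rw [edgeSet_fromEdgeSet, sdiff_eq_left]
    exact Set.disjoint_left.mpr fun e he => G.not_isDiag_of_mem_edgeSet he.1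
  have hadj : ∀ x y, K.Adj x y ↔ x ∈ A ∧ y ∈ A ∧ G.Adj x y := by
    intro x y
    simp only [K, fromEdgeSet_adj, Set.mem_ofPred_eq, mem_edgeSet, Sym2.mem_iff,
      forall_eq_or_imp, forall_eq]
    exact ⟨fun ⟨⟨h, hx, hy⟩, _⟩ => ⟨hx, hy, h⟩, fun ⟨hx, hy, h⟩ => ⟨⟨h, hx, hy⟩, h.ne⟩⟩
  rw [← hK, ← coe_edgeFinset, Set.ncard_coe_finset, Set.ncard_eq_toFinset_card',
    Set.toFinset_ofPred]
  convert K.two_mul_card_edgeFinset using 2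
  · congr!
  · ext ⟨x, y⟩
    simp [hadj]

end Counting

end SimpleGraph

section SignIndicator

variable {V : Type*} {s t : Set V} {u v : V}

noncomputable def signIndicator (s t : Set V) : V → ℝ := s.indicator 1 - t.indicator 1

theorem signIndicator_of_mem_left (h : Disjoint s t) (hv : v ∈ s) : signIndicator s t v = 1 := by
  simp [signIndicator, hv, Set.disjoint_left.mp h hv]

theorem signIndicator_of_mem_right (h : Disjoint s t) (hv : v ∈ t) :
    signIndicator s t v = -1 := by
  simp [signIndicator, hv, Set.disjoint_right.mp h hv]

theorem signIndicator_of_notMem (hv : v ∉ s ∪ t) : signIndicator s t v = 0 := by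
  simp_all [signIndicator]

theorem signIndicator_mul_self (h : Disjoint s t) (hv : v ∈ s ∪ t) :
    signIndicator s t v * signIndicator s t v = 1 := by
  rcases hv with hv | hv
  · simp [signIndicator_of_mem_left h hv]
  · simp [signIndicator_of_mem_right h hv]

theorem signIndicator_eq_neg (h : Disjoint s t) (huv : u ∈ s ∧ v ∈ t ∨ u ∈ t ∧ v ∈ s) :
    signIndicator s t v = -signIndicator s t u := by
  rcases huv with ⟨hu, hv⟩ | ⟨hu, hv⟩
  · rw [signIndicator_of_mem_left h hu, signIndicator_of_mem_right h hv]
  · rw [signIndicator_of_mem_right h hu, signIndicator_of_mem_left h hv, neg_neg]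

theorem signIndicator_eq_of_adj {G : SimpleGraph V} (h : Disjoint s t)
    (hsep : ∀ u ∈ s, ∀ v ∈ t, ¬ G.Adj u v) (hu : u ∈ s ∪ t) (hv : v ∈ s ∪ t) (huv : G.Adj u v) :
    signIndicator s t u = signIndicator s t v := by
  rcases hu with hu | hu <;> rcases hv with hv | hv
  · rw [signIndicator_of_mem_left h hu, signIndicator_of_mem_left h hv]
  · exact absurd huv (hsep u hu v hv)
  · exact absurd huv.symm (hsep v hv u hu)
  · rw [signIndicator_of_mem_right h hu, signIndicator_of_mem_right h hv]

variable [Fintype V] (G : SimpleGraph V) [DecidableRel G.Adj]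

theorem signIndicator_dotProduct_adjMatrix_mulVec_signIndicator (A₁ A₂ B₁ B₂ : Set V) :
    signIndicator B₁ B₂ ⬝ᵥ (G.adjMatrix ℝ *ᵥ signIndicator A₁ A₂)
      = {p : V × V | p.1 ∈ A₁ ∧ p.2 ∈ B₁ ∧ G.Adj p.1 p.2}.ncard
        - {p : V × V | p.1 ∈ A₁ ∧ p.2 ∈ B₂ ∧ G.Adj p.1 p.2}.ncard
        - {p : V × V | p.1 ∈ A₂ ∧ p.2 ∈ B₁ ∧ G.Adj p.1 p.2}.ncard
        + {p : V × V | p.1 ∈ A₂ ∧ p.2 ∈ B₂ ∧ G.Adj p.1 p.2}.ncard := by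
  rw [G.dotProduct_adjMatrix_mulVec_comm]
  simp only [signIndicator, sub_dotProduct, mulVec_sub, dotProduct_sub,
    G.indicator_dotProduct_adjMatrix_mulVec_indicator]
  ring

theorem signIndicator_dotProduct_adjMatrix_mulVec_one_eq_zero {M V₁ V₂ M₁ M₂ : Set V}
    (hV12 : V₁ ∪ V₂ = Mᶜ) (hV12disj : Disjoint V₁ V₂) (hsep : ∀ u ∈ V₁, ∀ v ∈ V₂, ¬ G.Adj u v)
    (hM12 : M₁ ∪ M₂ = M) (hM12disj : Disjoint M₁ M₂)
    (hk1 : {p : V × V | p.1 ∈ V₁ ∧ p.2 ∈ M₁ ∧ G.Adj p.1 p.2}.ncard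
         = {p : V × V | p.1 ∈ V₂ ∧ p.2 ∈ M₁ ∧ G.Adj p.1 p.2}.ncard)
    (hk2 : {p : V × V | p.1 ∈ V₁ ∧ p.2 ∈ M₂ ∧ G.Adj p.1 p.2}.ncard
         = {p : V × V | p.1 ∈ V₂ ∧ p.2 ∈ M₂ ∧ G.Adj p.1 p.2}.ncard)
    (hE : {e : Sym2 V | e ∈ G.edgeSet ∧ ∀ v ∈ e, v ∈ V₁}.ncard
        = {e : Sym2 V | e ∈ G.edgeSet ∧ ∀ v ∈ e, v ∈ V₂}.ncard) :
    signIndicator V₁ V₂ ⬝ᵥ (G.adjMatrix ℝ *ᵥ fun _ => 1) = 0 := by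
  have hone : (fun _ => (1 : ℝ))
      = V₁.indicator 1 + V₂.indicator 1 + (M₁.indicator 1 + M₂.indicator 1) := by
    funext v
    have hV := congrFun (Set.indicator_union_of_disjoint hV12disj (1 : V → ℝ)) v
    have hM := congrFun (Set.indicator_union_of_disjoint hM12disj (1 : V → ℝ)) v
    rw [hV12] at hV
    rw [hM12] at hM
    rw [Pi.add_apply, Pi.add_apply, Pi.add_apply, ← hV, ← hM, ← Pi.add_apply,
      Set.indicator_compl_add_self, Pi.one_apply]
  have hno : ∀ A B : Set V, (∀ u ∈ A, ∀ v ∈ B, ¬ G.Adj u v) →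
      {p : V × V | p.1 ∈ A ∧ p.2 ∈ B ∧ G.Adj p.1 p.2} = ∅ :=
    fun A B h => Set.eq_empty_of_forall_notMem fun p hp => h _ hp.1 _ hp.2.1 hp.2.2
  have hsep' : ∀ u ∈ V₂, ∀ v ∈ V₁, ¬ G.Adj u v := fun u hu v hv huv => hsep v hv u hu huv.symm
  rw [hone]
  simp only [signIndicator, mulVec_add, dotProduct_add, sub_dotProduct,
    G.indicator_dotProduct_adjMatrix_mulVec_indicator, hno _ _ hsep, hno _ _ hsep',
    ← G.two_mul_ncard_edges_within, hE, hk1, hk2]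
  push_cast
  ring

end SignIndicator

section FlowState

variable {V : Type*} [Fintype V] [DecidableEq V] {G : SimpleGraph V} [DecidableRel G.Adj]
  {M : Set V} [DecidablePred (· ∈ M)]

theorem walkOp_eq_self_of_reflecting_of_transmitting {ψ : V → V → ℂ}
    (hsum : ∀ v ∈ M, ∑ w ∈ G.neighborFinset v, ψ v w = 0)
    (hreflect : ∀ u v, v ∈ M → G.Adj u v → ψ v u = ψ u v)
    (htransmit : ∀ u v w, v ∉ M → G.Adj u v → G.Adj v w → ψ v w = ψ u v) :
    walkOp G M (fun a => ψ a.1.1 a.1.2) = fun a => ψ a.1.1 a.1.2 := by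
  funext ⟨⟨u, v⟩, huv⟩
  simp only [walkOp, shiftOp, coinOp]
  rw [Finset.sum_attach (G.neighborFinset v) (ψ v)]
  by_cases hv : v ∈ M
  · rw [hsum v hv, hreflect u v hv huv, if_pos hv]
    ring
  · have hconst : ∑ w ∈ G.neighborFinset v, ψ v w = G.degree v * ψ u v := by
      rw [← G.card_neighborFinset_eq_degree, ← nsmul_eq_mul, ← Finset.sum_const]
      exact Finset.sum_congr rfl fun w hw =>
        htransmit u v w hv huv ((G.mem_neighborFinset v w).mp hw)
    have hdeg : (G.degree v : ℂ) ≠ 0 := by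
      exact_mod_cast (G.degree_pos_iff_exists_adj v).mpr ⟨u, huv.symm⟩ |>.ne'
    rw [hconst, htransmit u v u hv huv huv.symm, if_neg hv]
    field_simp
    ring

def flowState (M : Set V) [DecidablePred (· ∈ M)] (γ : V → ℝ) (X : V → V → ℝ) (u w : V) : ℝ :=
  if u ∈ M then (if w ∈ M then X u w else γ w) else γ u

variable {γ : V → ℝ} {X : V → V → ℝ}

theorem sum_neighborFinset_flowState_of_mem (hγM : ∀ v ∈ M, γ v = 0)
    (hX : ∀ v ∈ M, ∑ w ∈ G.neighborFinset v ∩ M.toFinset, X v w = -(G.adjMatrix ℝ *ᵥ γ) v)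
    {v : V} (hv : v ∈ M) : ∑ w ∈ G.neighborFinset v, flowState M γ X v w = 0 := by
  have hsplit : ∀ w, flowState M γ X v w = (if w ∈ M.toFinset then X v w else 0) + γ w := by
    intro w
    by_cases hw : w ∈ M <;> simp [flowState, hv, hw, hγM]
  rw [Finset.sum_congr rfl fun w _ => hsplit w, Finset.sum_add_distrib, Finset.sum_ite_mem,
    hX v hv, SimpleGraph.adjMatrix_mulVec_apply, neg_add_cancel]

theorem walkOp_flowState (hγM : ∀ v ∈ M, γ v = 0)
    (hγ : ∀ u v, u ∉ M → v ∉ M → G.Adj u v → γ u = γ v)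
    (hXsymm : ∀ u ∈ M, ∀ w ∈ M, G.Adj u w → X w u = X u w)
    (hX : ∀ v ∈ M, ∑ w ∈ G.neighborFinset v ∩ M.toFinset, X v w = -(G.adjMatrix ℝ *ᵥ γ) v) :
    walkOp G M (fun a => (flowState M γ X a.1.1 a.1.2 : ℂ))
      = fun a => (flowState M γ X a.1.1 a.1.2 : ℂ) := by
  refine walkOp_eq_self_of_reflecting_of_transmitting (ψ := fun u w => (flowState M γ X u w : ℂ))
    (fun v hv => ?_) (fun u v hv huv => ?_) (fun u v w hv huv _ => ?_)
  · exact_mod_cast sum_neighborFinset_flowState_of_mem hγM hX hv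
  · by_cases hu : u ∈ M <;> simp [flowState, hu, hv, hXsymm v hv u, huv.symm]
  · by_cases hu : u ∈ M
    · simp [flowState, hu, hv]
    · simp [flowState, hu, hv, hγ u v hu hv huv]

theorem sum_arc_flowState (hγM : ∀ v ∈ M, γ v = 0)
    (hX : ∀ v ∈ M, ∑ w ∈ G.neighborFinset v ∩ M.toFinset, X v w = -(G.adjMatrix ℝ *ᵥ γ) v) :
    ∑ a : Arc G, (flowState M γ X a.1.1 a.1.2 : ℂ)
      = ((γ ⬝ᵥ (G.adjMatrix ℝ *ᵥ fun _ => 1) : ℝ) : ℂ) := by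
  rw [G.sum_arc (fun u w => (flowState M γ X u w : ℂ)), dotProduct]
  push_cast
  refine Finset.sum_congr rfl fun v _ => ?_
  by_cases hv : v ∈ M
  · rw [← Complex.ofReal_sum, sum_neighborFinset_flowState_of_mem hγM hX hv, hγM v hv]
    simp
  · simp [flowState, hv, mul_comm]

end FlowState

theorem stmt8_general {V : Type*} [Fintype V] [DecidableEq V] (G : SimpleGraph V) [DecidableRel G.Adj]
    (hdeg : ∀ v : V, 0 < G.degree v)
    (M : Set V) [DecidablePred (· ∈ M)]
    (hMconn : (G.induce M).Connected)
    -- the induced subgraph on `V \ M` has exactly two connected components `H₁` and `H₂`,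
    -- with vertex sets `V₁` and `V₂`
    (V₁ V₂ : Set V) (hV12 : V₁ ∪ V₂ = Mᶜ) (hV12disj : Disjoint V₁ V₂)
    (hH₁ : (G.induce V₁).Connected)
    (hsep : ∀ u ∈ V₁, ∀ v ∈ V₂, ¬ G.Adj u v)
    -- the induced subgraph on `M` is bipartite with partite sets `M₁` and `M₂`
    (M₁ M₂ : Set V) (hM12 : M₁ ∪ M₂ = M) (hM12disj : Disjoint M₁ M₂)
    (hbip : ∀ u ∈ M, ∀ v ∈ M, G.Adj u v → (u ∈ M₁ ∧ v ∈ M₂) ∨ (u ∈ M₂ ∧ v ∈ M₁))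
    -- `k₁₁ = k₂₁`: the numbers of edges joining `H₁` to `M₁` and `H₂` to `M₁` agree
    (hk1 : {p : V × V | p.1 ∈ V₁ ∧ p.2 ∈ M₁ ∧ G.Adj p.1 p.2}.ncard
         = {p : V × V | p.1 ∈ V₂ ∧ p.2 ∈ M₁ ∧ G.Adj p.1 p.2}.ncard)
    -- `k₁₂ = k₂₂`: the numbers of edges joining `H₁` to `M₂` and `H₂` to `M₂` agree
    (hk2 : {p : V × V | p.1 ∈ V₁ ∧ p.2 ∈ M₂ ∧ G.Adj p.1 p.2}.ncard
         = {p : V × V | p.1 ∈ V₂ ∧ p.2 ∈ M₂ ∧ G.Adj p.1 p.2}.ncard)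
    -- `|E₁| = |E₂|`
    (hE : {e : Sym2 V | e ∈ G.edgeSet ∧ ∀ v ∈ e, v ∈ V₁}.ncard
        = {e : Sym2 V | e ∈ G.edgeSet ∧ ∀ v ∈ e, v ∈ V₂}.ncard) :
    ∃ ψ : Arc G → ℂ, ψ ≠ 0 ∧ walkOp G M ψ = ψ ∧ ∑ a : Arc G, ψ a = 0 := by
  classical
  have hVM : ∀ v, v ∈ V₁ ∪ V₂ ↔ v ∉ M := fun v => by rw [hV12]; rfl
  have hγM : ∀ v ∈ M, signIndicator V₁ V₂ v = 0 := fun v hv =>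
    signIndicator_of_notMem fun h => (hVM v).mp h hv
  have hbal : ∑ v ∈ M.toFinset,
      signIndicator M₁ M₂ v * -(G.adjMatrix ℝ *ᵥ signIndicator V₁ V₂) v = 0 := by
    rw [Finset.sum_subset M.toFinset.subset_univ fun v _ hv => by
      rw [signIndicator_of_notMem (hM12 ▸ by simpa using hv), zero_mul]]
    simp only [mul_neg, Finset.sum_neg_distrib, neg_eq_zero]
    change signIndicator M₁ M₂ ⬝ᵥ (G.adjMatrix ℝ *ᵥ signIndicator V₁ V₂) = 0
    rw [signIndicator_dotProduct_adjMatrix_mulVec_signIndicator, hk1, hk2]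
    ring
  obtain ⟨X, hXsymm, hX⟩ := SimpleGraph.exists_flow_of_connected_induce hMconn
    (fun v hv => signIndicator_mul_self hM12disj (hM12 ▸ hv))
    (fun u hu w hw huw => signIndicator_eq_neg hM12disj (hbip u hu w hw huw)) hbal
  refine ⟨fun a => flowState M (signIndicator V₁ V₂) X a.1.1 a.1.2, fun h => ?_,
    walkOp_flowState hγM (fun u v hu hv => signIndicator_eq_of_adj hV12disj hsep
      ((hVM u).mpr hu) ((hVM v).mpr hv)) hXsymm hX, ?_⟩
  · obtain ⟨⟨u, hu⟩⟩ := hH₁.nonempty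
    obtain ⟨w, huw⟩ := (G.degree_pos_iff_exists_adj u).mp (hdeg u)
    have hu' : u ∉ M := (hVM u).mp (Or.inl hu)
    simpa [flowState, hu', signIndicator_of_mem_left hV12disj hu] using congrFun h ⟨(u, w), huw⟩
  · rw [sum_arc_flowState hγM hX, signIndicator_dotProduct_adjMatrix_mulVec_one_eq_zero G hV12
      hV12disj hsep hM12 hM12disj hk1 hk2 hE, Complex.ofReal_zero]

theorem stmt8 {V : Type*} [Fintype V] [DecidableEq V] (G : SimpleGraph V) [DecidableRel G.Adj]
    (hdeg : ∀ v : V, 0 < G.degree v)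
    (m : ℕ) (hm : m = G.edgeFinset.card)
    (M : Set V) [DecidablePred (· ∈ M)]
    (hG : G.Connected) (hM : M.Nonempty) (hMconn : (G.induce M).Connected)
    -- the induced subgraph on `V \ M` has exactly two connected components `H₁` and `H₂`,
    -- with vertex sets `V₁` and `V₂`
    (V₁ V₂ : Set V) (hV12 : V₁ ∪ V₂ = Mᶜ) (hV12disj : Disjoint V₁ V₂)
    (hH₁ : (G.induce V₁).Connected) (hH₂ : (G.induce V₂).Connected)
    (hsep : ∀ u ∈ V₁, ∀ v ∈ V₂, ¬ G.Adj u v)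
    -- the induced subgraph on `M` is bipartite with partite sets `M₁` and `M₂`
    (M₁ M₂ : Set V) (hM12 : M₁ ∪ M₂ = M) (hM12disj : Disjoint M₁ M₂)
    (hbip : ∀ u ∈ M, ∀ v ∈ M, G.Adj u v → (u ∈ M₁ ∧ v ∈ M₂) ∨ (u ∈ M₂ ∧ v ∈ M₁))
    -- `k₁₁ = k₂₁`: the numbers of edges joining `H₁` to `M₁` and `H₂` to `M₁` agree
    (hk1 : {p : V × V | p.1 ∈ V₁ ∧ p.2 ∈ M₁ ∧ G.Adj p.1 p.2}.ncard
         = {p : V × V | p.1 ∈ V₂ ∧ p.2 ∈ M₁ ∧ G.Adj p.1 p.2}.ncard)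
    -- `k₁₂ = k₂₂`: the numbers of edges joining `H₁` to `M₂` and `H₂` to `M₂` agree
    (hk2 : {p : V × V | p.1 ∈ V₁ ∧ p.2 ∈ M₂ ∧ G.Adj p.1 p.2}.ncard
         = {p : V × V | p.1 ∈ V₂ ∧ p.2 ∈ M₂ ∧ G.Adj p.1 p.2}.ncard)
    -- `|E₁| = |E₂|`
    (hE : {e : Sym2 V | e ∈ G.edgeSet ∧ ∀ v ∈ e, v ∈ V₁}.ncard
        = {e : Sym2 V | e ∈ G.edgeSet ∧ ∀ v ∈ e, v ∈ V₂}.ncard) :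
    ∃ ψ : Arc G → ℂ, ψ ≠ 0 ∧ walkOp G M ψ = ψ ∧ ∑ a : Arc G, ψ a = 0 :=
  stmt8_general G hdeg M hMconn V₁ V₂ hV12 hV12disj hH₁ hsep M₁ M₂ hM12 hM12disj hbip hk1 hk2 hE
end

section
/- Suppose G is connected, M is a nonempty proper subset of V, the subgraph of G induced on M is connected and bipartite with partite sets M₁ and M₂, and deg_G(M₁) = deg_G(M₂), where deg_G(M_i) = Σ_{v ∈ M_i} deg_G(v) is the total degree (in G) of the vertices of M_i. Then the coined quantum walk on G with marked set M has a stationary state, i.e., there exists a nonzero ψ : A(G) → ℂ with Uψ = ψ. -/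
open Finset

/-! A stationary state is `ψ(u,v) = 1 + g(u,v)` for a symmetric edge function `g` supported on
the edges of `G[M]` with `∑_w g(v,w) = -deg v` at every marked `v`: at an unmarked vertex `ψ` is
constant, which Grover diffusion fixes; at a marked vertex `ψ` sums to zero, so the negated
diffusion fixes it; and symmetry makes the flip-flop shift fix it.

Such a `g` is built by sending, for each `v ∈ M`, the charge `-deg v` along a walk in `G[M]` from
`v` to a fixed root `r`, with signs alternating along the walk. The charges are absorbed at the
walks' starting points, and what arrives at `r` is `± deg v`, the sign depending only on the side
of the bipartition containing `v`; `deg(M₁) = deg(M₂)` makes these cancel. -/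

theorem sum_ite_mem_eq_sub {V R : Type*} [DecidableEq V] [AddCommGroup R] {M : Set V}
    [Fintype M] {M₁ M₂ : Finset V} (hM12 : (↑M₁ ∪ ↑M₂ : Set V) = M) (hdisj : Disjoint M₁ M₂)
    (f : V → R) :
    ∑ x : M, (if x.1 ∈ M₁ then f x else -f x) = ∑ x ∈ M₁, f x - ∑ x ∈ M₂, f x := by
  rw [← sum_subtype (M₁ ∪ M₂) (p := (· ∈ M)) (by simp [← hM12])
      fun x => if x ∈ M₁ then f x else -f x, sum_union hdisj, sum_congr rfl fun x hx => if_pos hx,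
    sum_congr rfl fun x hx => if_neg (disjoint_right.mp hdisj hx), sum_neg_distrib, sub_eq_add_neg]

namespace SimpleGraph

variable {V : Type*} {G : SimpleGraph V}

theorem Coloring.neg_one_pow_length {R : Type*} [Monoid R] [HasDistribNeg R]
    (c : G.Coloring Bool) {u v : V} (p : G.Walk u v) :
    (-1 : R) ^ p.length = if c u = c v then 1 else -1 := by
  by_cases he : Even p.length
  · have hc := (c.even_length_iff_congr p).mp he
    rw [he.neg_one_pow, if_pos (Bool.eq_iff_iff.mpr hc)]
  · have hc : ¬ (c u ↔ c v) := mt (c.even_length_iff_congr p).mpr he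
    rw [(Nat.not_even_iff_odd.mp he).neg_one_pow, if_neg (mt Bool.eq_iff_iff.mp hc)]

section AlternatingFlow

variable [DecidableEq V]

def Walk.alternatingFlow : {a b : V} → G.Walk a b → ℂ → V → V → ℂ
  | _, _, .nil, _ => fun _ _ => 0
  | a, _, .cons (v := c) _ p, δ => fun x y =>
      (if x = a ∧ y = c ∨ x = c ∧ y = a then δ else 0) + p.alternatingFlow (-δ) x y

namespace Walk

theorem alternatingFlow_comm {a b : V} (p : G.Walk a b) (δ : ℂ) (x y : V) :
    p.alternatingFlow δ x y = p.alternatingFlow δ y x := by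
  induction p generalizing δ with
  | nil => rfl
  | cons _ q ih =>
    simp only [alternatingFlow, ih]
    congr 1
    exact if_congr (by tauto) rfl rfl

theorem alternatingFlow_eq_zero_of_not_adj {a b : V} (p : G.Walk a b) (δ : ℂ) {x y : V}
    (hxy : ¬ G.Adj x y) : p.alternatingFlow δ x y = 0 := by
  induction p generalizing δ with
  | nil => rfl
  | cons h q ih =>
    simp only [alternatingFlow, ih, add_zero]
    rw [if_neg]
    rintro (⟨rfl, rfl⟩ | ⟨rfl, rfl⟩)
    exacts [hxy h, hxy h.symm]

theorem sum_alternatingFlow [Fintype V] {a b : V} (p : G.Walk a b) (δ : ℂ) (x : V) :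
    ∑ y, p.alternatingFlow δ x y =
      (if x = a then δ else 0) - (if x = b then (-1) ^ p.length * δ else 0) := by
  induction p generalizing δ with
  | nil => split_ifs <;> simp [alternatingFlow]
  | @cons a c b h q ih =>
    have hedge : ∑ y, (if x = a ∧ y = c ∨ x = c ∧ y = a then δ else 0) =
        (if x = a then δ else 0) + (if x = c then δ else 0) := by
      by_cases hxa : x = a
      · subst hxa
        simp [h.ne]
      · by_cases hxc : x = c
        · subst hxc
          simp [hxa]
        · simp [hxa, hxc]
    simp only [alternatingFlow, sum_add_distrib, hedge, ih, length_cons, pow_succ]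
    split_ifs <;> ring

end Walk

theorem Connected.exists_flow_of_coloring [Fintype V] (hG : G.Connected) (c : G.Coloring Bool)
    (b : V → ℂ) (hb : ∑ x, (if c x then b x else -b x) = 0) :
    ∃ g : V → V → ℂ, (∀ x y, g x y = g y x) ∧ (∀ x y, ¬ G.Adj x y → g x y = 0) ∧
      ∀ x, ∑ y, g x y = b x := by
  obtain ⟨r⟩ := hG.nonempty
  have p : ∀ v, G.Walk v r := fun v => (hG v r).some
  refine ⟨fun x y => ∑ v, (p v).alternatingFlow (b v) x y,
    fun x y => sum_congr rfl fun v _ => (p v).alternatingFlow_comm _ x y,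
    fun x y hxy => sum_eq_zero fun v _ => (p v).alternatingFlow_eq_zero_of_not_adj _ hxy,
    fun x => ?_⟩
  have harrive : ∑ v, (-1) ^ (p v).length * b v = 0 := by
    simp only [c.neg_one_pow_length, ite_mul, one_mul, neg_one_mul]
    cases c r
    · rw [← neg_eq_zero, ← hb, ← sum_neg_distrib]
      exact sum_congr rfl fun v _ => by cases c v <;> simp
    · simpa using hb
  rw [sum_comm]
  simp only [Walk.sum_alternatingFlow, sum_sub_distrib, sum_ite_eq, mem_univ, if_true]
  by_cases hx : x = r <;> simp [hx, harrive]

end AlternatingFlow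

theorem exists_flow_of_induce [Fintype V] [DecidableRel G.Adj] {M : Set V}
    [DecidablePred (· ∈ M)] {b : M → ℂ} {g : M → M → ℂ} (hsymm : ∀ x y, g x y = g y x)
    (hadj : ∀ x y, ¬ (G.induce M).Adj x y → g x y = 0) (hdiv : ∀ x, ∑ y, g x y = b x) :
    ∃ g' : V → V → ℂ, (∀ x y, g' x y = g' y x) ∧ (∀ x ∉ M, ∀ y, g' x y = 0) ∧
      ∀ x (hx : x ∈ M), ∑ y ∈ G.neighborFinset x, g' x y = b ⟨x, hx⟩ := by
  refine ⟨fun x y => if h : x ∈ M ∧ y ∈ M then g ⟨x, h.1⟩ ⟨y, h.2⟩ else 0, fun x y => ?_,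
    fun x hx y => dif_neg (hx ·.1), fun x hx => ?_⟩
  · by_cases hx : x ∈ M <;> by_cases hy : y ∈ M <;> simp [hx, hy, hsymm]
  · have hnonadj : ∀ y ∉ G.neighborFinset x,
        (if h : x ∈ M ∧ y ∈ M then g ⟨x, h.1⟩ ⟨y, h.2⟩ else 0) = 0 := fun y hy =>
      by split_ifs; exacts [hadj _ _ (by simpa using hy), rfl]
    rw [sum_subset (subset_univ _) fun y _ hy => hnonadj y hy, ← hdiv,
      ← Fintype.sum_subtype_add_sum_subtype (· ∈ M)]
    simp [hx, fun y : {y // y ∉ M} => y.2]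

end SimpleGraph

theorem walkOp_eq_self_of_flow {V : Type*} [Fintype V] [DecidableEq V] {G : SimpleGraph V}
    [DecidableRel G.Adj] {M : Set V} [DecidablePred (· ∈ M)] {g : V → V → ℂ}
    (hsymm : ∀ x y, g x y = g y x) (hout : ∀ x ∉ M, ∀ y, g x y = 0)
    (hin : ∀ x ∈ M, ∑ y ∈ G.neighborFinset x, g x y = -G.degree x) :
    walkOp G M (fun a => 1 + g a.1.1 a.1.2) = fun a => 1 + g a.1.1 a.1.2 := by
  funext ⟨⟨u, v⟩, huv⟩
  have hdeg : (G.degree v : ℂ) ≠ 0 :=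
    Nat.cast_ne_zero.mpr ((G.degree_pos_iff_exists_adj v).mpr ⟨u, huv.symm⟩).ne'
  simp only [walkOp, shiftOp, coinOp]
  rw [sum_attach (G.neighborFinset v) fun w => 1 + g v w, sum_add_distrib, sum_const,
    G.card_neighborFinset_eq_degree, hsymm u v]
  by_cases hv : v ∈ M
  · simp [hv, hin v hv]
  · simp [hv, hout v hv]
    field_simp
    ring

theorem stmt9_general {V : Type*} [Fintype V] [DecidableEq V] (G : SimpleGraph V) [DecidableRel G.Adj]
    (hdeg : ∀ v : V, 0 < G.degree v)
    (M : Set V) [DecidablePred (· ∈ M)]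
    (hMproper : M ≠ Set.univ)
    (hMconn : (G.induce M).Connected)
    -- the induced subgraph on `M` is bipartite with partite sets `M₁` and `M₂`
    (M₁ M₂ : Finset V) (hM12 : (↑M₁ ∪ ↑M₂ : Set V) = M) (hM12disj : Disjoint M₁ M₂)
    (hbip : ∀ u ∈ M, ∀ v ∈ M, G.Adj u v → (u ∈ M₁ ∧ v ∈ M₂) ∨ (u ∈ M₂ ∧ v ∈ M₁))
    -- `deg_G(M₁) = deg_G(M₂)`
    (hdegEq : ∑ v ∈ M₁, G.degree v = ∑ v ∈ M₂, G.degree v) :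
    ∃ ψ : Arc G → ℂ, ψ ≠ 0 ∧ walkOp G M ψ = ψ := by
  let c : (G.induce M).Coloring Bool :=
    SimpleGraph.Coloring.mk (fun x => x.1 ∈ M₁) fun {x y} hxy => by
      rcases hbip x x.2 y y.2 (by simpa using hxy) with ⟨hx, hy⟩ | ⟨hx, hy⟩
      · simp [hx, disjoint_right.mp hM12disj hy]
      · simp [hy, disjoint_right.mp hM12disj hx]
  have hbalance : ∑ x : M, (if c x then -(G.degree x : ℂ) else - -(G.degree x : ℂ)) = 0 := by
    simp only [c, SimpleGraph.Coloring.mk, RelHom.coeFn_mk, decide_eq_true_eq]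
    rw [sum_ite_mem_eq_sub hM12 hM12disj fun x => -(G.degree x : ℂ)]
    simp [← Nat.cast_sum, hdegEq]
  obtain ⟨g, hsymm, hadj, hdiv⟩ := hMconn.exists_flow_of_coloring c _ hbalance
  obtain ⟨g', hsymm', hout, hin⟩ := SimpleGraph.exists_flow_of_induce hsymm hadj hdiv
  refine ⟨fun a => 1 + g' a.1.1 a.1.2, fun h => ?_, walkOp_eq_self_of_flow hsymm' hout hin⟩
  obtain ⟨u, hu⟩ := (Set.ne_univ_iff_exists_notMem M).mp hMproper
  obtain ⟨v, huv⟩ := (G.degree_pos_iff_exists_adj u).mp (hdeg u)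
  simpa [hout u hu] using congrFun h ⟨(u, v), huv⟩

theorem stmt9 {V : Type*} [Fintype V] [DecidableEq V] (G : SimpleGraph V) [DecidableRel G.Adj]
    (hdeg : ∀ v : V, 0 < G.degree v)
    (M : Set V) [DecidablePred (· ∈ M)]
    (hG : G.Connected) (hM : M.Nonempty) (hMproper : M ≠ Set.univ)
    (hMconn : (G.induce M).Connected)
    -- the induced subgraph on `M` is bipartite with partite sets `M₁` and `M₂`
    (M₁ M₂ : Finset V) (hM12 : (↑M₁ ∪ ↑M₂ : Set V) = M) (hM12disj : Disjoint M₁ M₂)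
    (hbip : ∀ u ∈ M, ∀ v ∈ M, G.Adj u v → (u ∈ M₁ ∧ v ∈ M₂) ∨ (u ∈ M₂ ∧ v ∈ M₁))
    -- `deg_G(M₁) = deg_G(M₂)`
    (hdegEq : ∑ v ∈ M₁, G.degree v = ∑ v ∈ M₂, G.degree v) :
    ∃ ψ : Arc G → ℂ, ψ ≠ 0 ∧ walkOp G M ψ = ψ :=
  stmt9_general G hdeg M hMproper hMconn M₁ M₂ hM12 hM12disj hbip hdegEq
end

section
/- Suppose G is connected, M is a nonempty proper subset of V, and the subgraph of G induced on M is connected and not bipartite (it contains a cycle of odd length). Then the coined quantum walk on G with marked set M has a stationary state, i.e., there exists a nonzero ψ : A(G) → ℂ with Uψ = ψ. -/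
open Finset

/-!
A state fixed by both the coin and the shift is stationary. Take `ψ` symmetric, equal to `1` on
every arc leaving an unmarked vertex and to an edge weight `F e` on the edges inside `M`. The coin
then fixes `ψ` at unmarked vertices, and at a marked vertex `v` it fixes `ψ` exactly when the arc
values at `v` sum to zero, i.e. `∑_{w ∈ N(v) ∩ M} F(vw) = -#(N(v) \ M)`. Such weights exist because
the unsigned incidence matrix of a connected non-bipartite graph has full row rank: a vector `c`
with `c u + c v = 0` along every edge has `c v = ± c x` for a fixed `x`, and the sign would
2-colour the graph unless `c = 0`.
-/

namespace SimpleGraph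

variable {W K : Type*} {H : SimpleGraph W}

theorem Preconnected.sq_eq_sq_of_forall_adj_add_eq_zero [CommRing K] (hH : H.Preconnected)
    {c : W → K} (hc : ∀ ⦃u v⦄, H.Adj u v → c u + c v = 0) (u v : W) : c u ^ 2 = c v ^ 2 := by
  obtain ⟨p⟩ := hH u v
  induction p with
  | nil => rfl
  | cons huw _ ih => rw [← ih, eq_neg_of_add_eq_zero_right (hc huw), neg_sq]

theorem Preconnected.eq_zero_of_forall_adj_add_eq_zero [Field K] [NeZero (2 : K)]
    (hH : H.Preconnected) (hbip : ¬ H.IsBipartite) {c : W → K}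
    (hc : ∀ ⦃u v⦄, H.Adj u v → c u + c v = 0) : c = 0 := by
  classical
  by_contra! hne
  obtain ⟨x, hx⟩ := Function.ne_iff.mp hne
  have h2x : 2 * c x ≠ 0 := mul_ne_zero two_ne_zero hx
  have hneg : c x ≠ -c x := fun h => h2x (by linear_combination h)
  have hsign (u : W) : c u = c x ∨ c u = -c x :=
    sq_eq_sq_iff_eq_or_eq_neg.mp (hH.sq_eq_sq_of_forall_adj_add_eq_zero hc u x)
  refine hbip ⟨Coloring.mk (fun v => if c v = c x then (0 : Fin 2) else 1) fun {u v} huv => ?_⟩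
  have huv' := hc huv
  rcases hsign u with hu | hu <;> rcases hsign v with hv | hv
  · exact absurd (by linear_combination huv' - hu - hv) h2x
  · simp [hu, hv, hneg.symm]
  · simp [hu, hv, hneg.symm]
  · exact absurd (by linear_combination -huv' + hu + hv) h2x

variable [Fintype W] [DecidableEq W] [DecidableRel H.Adj]

theorem vecMul_incMatrix_apply_of_adj [CommRing K] (c : W → K) {u v : W} (huv : H.Adj u v) :
    Matrix.vecMul c (H.incMatrix K) s(u, v) = c u + c v := by
  have hite (i : W) : (if i = u ∨ i = v then c i else 0) =
      (if i = u then c i else 0) + (if i = v then c i else 0) := by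
    by_cases hu : i = u <;> by_cases hv : i = v <;> simp_all [huv.ne]
  simp [Matrix.vecMul, dotProduct, incMatrix_apply', mk'_mem_incidenceSet_iff, huv, hite,
    sum_add_distrib]

theorem incMatrix_mulVec_apply [CommRing K] (f : Sym2 W → K) (v : W) :
    (H.incMatrix K).mulVec f v = ∑ w ∈ H.neighborFinset v, f s(v, w) := by
  have hmap : ({e | e ∈ H.incidenceSet v} : Finset (Sym2 W)) =
      (H.neighborFinset v).map (Sym2.mkEmbedding v) := by
    ext e
    induction e using Sym2.ind
    simp only [mem_filter, mem_univ, true_and, mk'_mem_incidenceSet_iff, mem_map,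
      mem_neighborFinset, Sym2.mkEmbedding_apply, Sym2.eq_iff]
    aesop (add simp [adj_comm])
  calc _ = ∑ e ∈ ({e | e ∈ H.incidenceSet v} : Finset (Sym2 W)), f e := by
        simp [Matrix.mulVec, dotProduct, incMatrix_apply', sum_filter]
    _ = _ := by rw [hmap, sum_map]; rfl

theorem Preconnected.incMatrix_mulVec_surjective [Field K] [NeZero (2 : K)]
    (hH : H.Preconnected) (hbip : ¬ H.IsBipartite) :
    Function.Surjective (H.incMatrix K).mulVec := by
  have hinj : Function.Injective (H.incMatrix K).transpose.mulVecLin := by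
    refine (injective_iff_map_eq_zero _).mpr fun c hc => ?_
    refine hH.eq_zero_of_forall_adj_add_eq_zero hbip fun u v huv => ?_
    rw [← vecMul_incMatrix_apply_of_adj c huv, ← Matrix.mulVec_transpose]
    exact congrFun hc s(u, v)
  have hrange : LinearMap.range (H.incMatrix K).mulVecLin = ⊤ := by
    apply Submodule.eq_top_of_finrank_eq
    rw [← Matrix.rank, ← Matrix.rank_transpose, Matrix.rank, LinearMap.finrank_range_of_inj hinj]
  exact LinearMap.range_eq_top.mp hrange

section InducedSubgraph

variable {V : Type*} {G : SimpleGraph V} {M : Set V}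

theorem IsBipartite.exists_bipartition_of_induce (h : (G.induce M).IsBipartite) :
    ∃ A B : Set V, A ∪ B = M ∧ Disjoint A B ∧
      ∀ u ∈ M, ∀ v ∈ M, G.Adj u v → (u ∈ A ∧ v ∈ B) ∨ (u ∈ B ∧ v ∈ A) := by
  obtain ⟨C⟩ := h
  have hC (x : M) : C x = 0 ∨ C x = 1 := by omega
  refine ⟨Subtype.val '' {v | C v = 0}, Subtype.val '' {v | C v = 1}, ?_, ?_, ?_⟩
  · ext x
    constructor
    · rintro (⟨⟨x, hx⟩, -, rfl⟩ | ⟨⟨x, hx⟩, -, rfl⟩) <;> exact hx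
    · intro hx
      rcases hC ⟨x, hx⟩ with h | h
      exacts [Or.inl ⟨_, h, rfl⟩, Or.inr ⟨_, h, rfl⟩]
  · rw [Set.disjoint_left]
    rintro _ ⟨x, hx0, rfl⟩ ⟨y, hy1, hxy⟩
    cases Subtype.ext hxy
    simp_all
  · intro u hu v hv huv
    have hne : C ⟨u, hu⟩ ≠ C ⟨v, hv⟩ := C.valid huv
    rcases hC ⟨u, hu⟩ with h | h
    · exact Or.inl ⟨⟨_, h, rfl⟩, ⟨⟨v, hv⟩, show C ⟨v, hv⟩ = 1 by omega, rfl⟩⟩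
    · exact Or.inr ⟨⟨_, h, rfl⟩, ⟨⟨v, hv⟩, show C ⟨v, hv⟩ = 0 by omega, rfl⟩⟩

theorem exists_sum_neighborFinset_filter_eq [Fintype V] [DecidableEq V] [DecidableRel G.Adj]
    [DecidablePred (· ∈ M)] [Field K] [NeZero (2 : K)]
    (hM : (G.induce M).Preconnected) (hbip : ¬ (G.induce M).IsBipartite) (b : V → K) :
    ∃ F : Sym2 V → K, ∀ v ∈ M, ∑ w ∈ G.neighborFinset v with w ∈ M, F s(v, w) = b v := by
  obtain ⟨f, hf⟩ := hM.incMatrix_mulVec_surjective (K := K) hbip fun v => b v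
  have hval : Function.Injective (Sym2.map (Subtype.val : M → V)) :=
    Sym2.map.injective Subtype.val_injective
  refine ⟨Function.extend (Sym2.map Subtype.val) f 0, fun v hv => ?_⟩
  have hnbr : (G.induce M).neighborFinset ⟨v, hv⟩ = (G.neighborFinset v).subtype (· ∈ M) := by
    ext w
    simp
  rw [← congrFun hf ⟨v, hv⟩, incMatrix_mulVec_apply, hnbr, ← sum_subtype_eq_sum_filter]
  exact sum_congr rfl fun w _ => hval.extend_apply f 0 s(⟨v, hv⟩, w)

end InducedSubgraph

end SimpleGraph

section QuantumWalk

variable {V : Type*} [Fintype V] [DecidableEq V] {G : SimpleGraph V} [DecidableRel G.Adj]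
  {M : Set V} [DecidablePred (· ∈ M)]

theorem coinOp_apply (g : V × V → ℂ) (a : Arc G) :
    coinOp G M (fun b => g b.1) a = (if a.1.1 ∈ M then -1 else 1) *
      (2 / G.degree a.1.1 * ∑ w ∈ G.neighborFinset a.1.1, g (a.1.1, w) - g a.1) := by
  rw [coinOp, sum_attach (G.neighborFinset a.1.1) fun w => g (a.1.1, w)]

theorem coinOp_apply_of_mem_s10 {g : V × V → ℂ} {a : Arc G} (ha : a.1.1 ∈ M)
    (hg : ∑ w ∈ G.neighborFinset a.1.1, g (a.1.1, w) = 0) :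
    coinOp G M (fun b => g b.1) a = g a.1 := by
  rw [coinOp_apply, if_pos ha, hg]
  ring

theorem coinOp_apply_of_notMem_s10 {g : V × V → ℂ} {a : Arc G} (ha : a.1.1 ∉ M)
    (hg : ∀ w ∈ G.neighborFinset a.1.1, g (a.1.1, w) = g a.1) :
    coinOp G M (fun b => g b.1) a = g a.1 := by
  have hdeg : (G.degree a.1.1 : ℂ) ≠ 0 :=
    Nat.cast_ne_zero.mpr ((G.degree_pos_iff_exists_adj _).mpr ⟨_, a.2⟩).ne'
  rw [coinOp_apply, if_neg ha, sum_congr rfl hg, sum_const, G.card_neighborFinset_eq_degree,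
    nsmul_eq_mul]
  field_simp
  ring

end QuantumWalk

theorem stmt10_general {V : Type*} [Fintype V] [DecidableEq V] (G : SimpleGraph V) [DecidableRel G.Adj]
    (hdeg : ∀ v : V, 0 < G.degree v)
    (M : Set V) [DecidablePred (· ∈ M)]
    (hMproper : M ≠ Set.univ)
    (hMconn : (G.induce M).Connected)
    -- the induced subgraph on `M` is not bipartite
    (hnotbip : ¬ ∃ (A B : Set V), A ∪ B = M ∧ Disjoint A B ∧
        ∀ u ∈ M, ∀ v ∈ M, G.Adj u v → (u ∈ A ∧ v ∈ B) ∨ (u ∈ B ∧ v ∈ A)) :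
    ∃ ψ : Arc G → ℂ, ψ ≠ 0 ∧ walkOp G M ψ = ψ := by
  obtain ⟨u, hu⟩ := (Set.ne_univ_iff_exists_notMem M).mp hMproper
  obtain ⟨w, huw⟩ := (G.degree_pos_iff_exists_adj u).mp (hdeg u)
  obtain ⟨F, hF⟩ := SimpleGraph.exists_sum_neighborFinset_filter_eq hMconn.preconnected
    (fun h => hnotbip h.exists_bipartition_of_induce)
    fun v => -(#{w ∈ G.neighborFinset v | w ∉ M} : ℂ)
  set g : V × V → ℂ := fun p => if p.1 ∈ M ∧ p.2 ∈ M then F s(p.1, p.2) else 1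
  have hshift : shiftOp G (fun a => g a.1) = fun a => g a.1 := by
    funext a
    simp [shiftOp, g, and_comm, Sym2.eq_swap]
  have hcoin : coinOp G M (fun a => g a.1) = fun a => g a.1 := by
    funext a
    by_cases hv : a.1.1 ∈ M
    · refine coinOp_apply_of_mem_s10 hv ?_
      simp only [g, hv, true_and]
      rw [sum_ite, hF _ hv, sum_const, nsmul_one, neg_add_cancel]
    · exact coinOp_apply_of_notMem_s10 hv fun x _ => by simp [g, hv]
  refine ⟨fun a => g a.1, fun h => ?_, by rw [walkOp, hcoin, hshift]⟩
  simpa [g, hu] using congrFun h ⟨(u, w), huw⟩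

theorem stmt10 {V : Type*} [Fintype V] [DecidableEq V] (G : SimpleGraph V) [DecidableRel G.Adj]
    (hdeg : ∀ v : V, 0 < G.degree v)
    (M : Set V) [DecidablePred (· ∈ M)]
    (hG : G.Connected) (hM : M.Nonempty) (hMproper : M ≠ Set.univ)
    (hMconn : (G.induce M).Connected)
    -- the induced subgraph on `M` is not bipartite
    (hnotbip : ¬ ∃ (A B : Set V), A ∪ B = M ∧ Disjoint A B ∧
        ∀ u ∈ M, ∀ v ∈ M, G.Adj u v → (u ∈ A ∧ v ∈ B) ∨ (u ∈ B ∧ v ∈ A)) :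
    ∃ ψ : Arc G → ℂ, ψ ≠ 0 ∧ walkOp G M ψ = ψ :=
  stmt10_general G hdeg M hMproper hMconn hnotbip
end
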